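/- arXiv:2410.18477 — 3 statements merged into one kernel-verified Lean document; each statement's English description precedes it below -/
import Mathlib

section
/- Let t : ℝⁿ → ℝ be twice continuously differentiable near x, satisfy ‖∇t(y)‖² = 4K·t(y) in a neighborhood of x, and suppose ∇t(x) ≠ 0. Then 2K is an eigenvalue of the Hessian H_t(x), with eigenvector ∇t(x). -/
open InnerProductSpace

theorem stmt3 {n : ℕ} (t : EuclideanSpace ℝ (Fin n) → ℝ) (x : EuclideanSpace ℝ (Fin n))
    (K : ℝ) (ht : ContDiffAt ℝ 2 t x)
    (heik : ∀ᶠ y in nhds x, ‖gradient t y‖ ^ 2 = 4 * K * t y)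
    (hne : gradient t x ≠ 0) :
    Module.End.HasEigenvector
      ((fderiv ℝ (gradient t) x : EuclideanSpace ℝ (Fin n) →ₗ[ℝ] EuclideanSpace ℝ (Fin n)))
      (2 * K) (gradient t x) ∧
    Module.End.HasEigenvalue
      ((fderiv ℝ (gradient t) x : EuclideanSpace ℝ (Fin n) →ₗ[ℝ] EuclideanSpace ℝ (Fin n)))
      (2 * K) := by
  -- differentiability facts
  have h1 : ContDiffAt ℝ 1 (fderiv ℝ t) x := ht.fderiv_right (m := 1) (by norm_num)
  have hdf : DifferentiableAt ℝ (fderiv ℝ t) x := h1.differentiableAt (by norm_num)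
  have hgeq : gradient t = (⇑(toDual ℝ (EuclideanSpace ℝ (Fin n))).symm) ∘ fderiv ℝ t := rfl
  have hdg : DifferentiableAt ℝ (gradient t) x := by
    rw [hgeq]
    exact ((toDual ℝ (EuclideanSpace ℝ (Fin n))).symm.differentiable.differentiableAt).comp x hdf
  have hdt : DifferentiableAt ℝ t x := ht.differentiableAt (by norm_num)
  -- fderiv of gradient vs second fderiv
  have hDg : ∀ v w : EuclideanSpace ℝ (Fin n), ⟪fderiv ℝ (gradient t) x v, w⟫_ℝ = fderiv ℝ (fderiv ℝ t) x v w := by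
    intro v w
    rw [hgeq, (toDual ℝ (EuclideanSpace ℝ (Fin n))).symm.comp_fderiv]
    exact InnerProductSpace.toDual_symm_apply
  -- fderiv of t via gradient
  have hft : ∀ v : EuclideanSpace ℝ (Fin n), fderiv ℝ t x v = ⟪gradient t x, v⟫_ℝ := by
    intro v
    rw [show gradient t x = (toDual ℝ (EuclideanSpace ℝ (Fin n))).symm (fderiv ℝ t x) from rfl,
      InnerProductSpace.toDual_symm_apply]
  -- differentiate the eikonal equation
  have hL : HasFDerivAt (fun y => ⟪gradient t y, gradient t y⟫_ℝ)
      ((fderivInnerCLM ℝ (gradient t x, gradient t x)).comp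
        ((fderiv ℝ (gradient t) x).prod (fderiv ℝ (gradient t) x))) x :=
    hdg.hasFDerivAt.inner ℝ hdg.hasFDerivAt
  have heik' : (fun y => ⟪gradient t y, gradient t y⟫_ℝ) =ᶠ[nhds x] fun y => 4 * K * t y :=
    heik.mono fun y hy => by simp only []; rw [real_inner_self_eq_norm_sq, hy]
  have hR : HasFDerivAt (fun y => 4 * K * t y) ((4 * K) • fderiv ℝ t x) x :=
    hdt.hasFDerivAt.const_mul (4 * K)
  have hL' : HasFDerivAt (fun y => 4 * K * t y)
      ((fderivInnerCLM ℝ (gradient t x, gradient t x)).comp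
        ((fderiv ℝ (gradient t) x).prod (fderiv ℝ (gradient t) x))) x :=
    hL.congr_of_eventuallyEq heik'.symm
  have hderiv := hL'.unique hR
  have hkey : ∀ v : EuclideanSpace ℝ (Fin n), ⟪fderiv ℝ (gradient t) x v, gradient t x⟫_ℝ = 2 * K * ⟪gradient t x, v⟫_ℝ := by
    intro v
    have := congrArg (fun L : EuclideanSpace ℝ (Fin n) →L[ℝ] ℝ => L v) hderiv
    simp only [ContinuousLinearMap.comp_apply, ContinuousLinearMap.prod_apply,
      fderivInnerCLM_apply, ContinuousLinearMap.smul_apply, smul_eq_mul] at this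
    rw [hft v] at this
    rw [real_inner_comm] at this
    linarith [this]
  -- symmetry of second derivative
  have hsymm : IsSymmSndFDerivAt ℝ t x := ht.isSymmSndFDerivAt (by simp)
  -- main eigen equation
  have hmain : fderiv ℝ (gradient t) x (gradient t x) = (2 * K) • gradient t x := by
    apply ext_inner_right ℝ
    intro v
    rw [hDg, hsymm.eq, ← hDg, hkey v, real_inner_smul_left]
  refine ⟨⟨Module.End.mem_eigenspace_iff.mpr ?_, hne⟩, ?_⟩
  · simpa using hmain
  · exact Module.End.hasEigenvalue_of_hasEigenvector
      ⟨Module.End.mem_eigenspace_iff.mpr (by simpa using hmain), hne⟩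
end

section
/- Let t : ℝⁿ → ℝ be twice continuously differentiable near x, satisfy ‖∇t(y)‖² = 4K·t(y) near x, and suppose ∇t(x) ≠ 0. Then det(H_t(x) − 2K·I) = 0. -/
open scoped RealInnerProductSpace

lemma det_adjoint_eq {n : ℕ} (f : EuclideanSpace ℝ (Fin n) →ₗ[ℝ] EuclideanSpace ℝ (Fin n)) :
    LinearMap.det (LinearMap.adjoint f) = LinearMap.det f := by
  classical
  let b := EuclideanSpace.basisFun (Fin n) ℝ
  rw [← LinearMap.det_toMatrix b.toBasis f, ← LinearMap.det_toMatrix b.toBasis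
    (LinearMap.adjoint f), LinearMap.toMatrix_adjoint b b, Matrix.det_conjTranspose]
  simp

theorem stmt4 {n : ℕ} (t : EuclideanSpace ℝ (Fin n) → ℝ) (x : EuclideanSpace ℝ (Fin n))
    (K : ℝ) (ht : ContDiffAt ℝ 2 t x)
    (heik : ∀ᶠ y in nhds x, ‖gradient t y‖ ^ 2 = 4 * K * t y)
    (hne : gradient t x ≠ 0) :
    LinearMap.det
      ((fderiv ℝ (gradient t) x : EuclideanSpace ℝ (Fin n) →ₗ[ℝ] EuclideanSpace ℝ (Fin n))
        - (2 * K) • LinearMap.id) = 0 := by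
  set g : EuclideanSpace ℝ (Fin n) → EuclideanSpace ℝ (Fin n) := gradient t with hgdef
  -- differentiability of the gradient at x
  have hfd : DifferentiableAt ℝ (fderiv ℝ t) x :=
    (ht.fderiv_right (m := 1) (le_refl 2)).differentiableAt (by norm_num)
  have hgd : DifferentiableAt ℝ g x := by
    have : g = fun y => (InnerProductSpace.toDual ℝ (EuclideanSpace ℝ (Fin n))).symm (fderiv ℝ t y) := rfl
    rw [this]
    exact ((InnerProductSpace.toDual ℝ (EuclideanSpace ℝ (Fin n))).symm.differentiable.differentiableAt).comp x hfd
  set H : EuclideanSpace ℝ (Fin n) →L[ℝ] EuclideanSpace ℝ (Fin n) := fderiv ℝ g x with hHdef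
  have hH : HasFDerivAt g H x := hgd.hasFDerivAt
  -- derivative of the eikonal equation
  have heq : (fun y => ⟪g y, g y⟫) =ᶠ[nhds x] (fun y => 4 * K * t y) := by
    filter_upwards [heik] with y hy
    rw [real_inner_self_eq_norm_sq, hy]
  have htd : DifferentiableAt ℝ t x := ht.differentiableAt (by norm_num)
  have hder1 : HasFDerivAt (fun y => ⟪g y, g y⟫)
      ((fderivInnerCLM ℝ (g x, g x)).comp (H.prod H)) x := hH.inner ℝ hH
  have hder2 : HasFDerivAt (fun y => 4 * K * t y) ((4 * K) • fderiv ℝ t x) x :=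
    HasFDerivAt.const_mul (𝕜 := ℝ) htd.hasFDerivAt (4 * K)
  have hfe := heq.fderiv_eq (𝕜 := ℝ)
  rw [hder1.fderiv, hder2.fderiv] at hfe
  have htx : ∀ v, fderiv ℝ t x v = ⟪g x, v⟫ := by
    intro v
    exact (InnerProductSpace.toDual_symm_apply).symm
  have key : ∀ v : EuclideanSpace ℝ (Fin n), ⟪g x, H v⟫ = 2 * K * ⟪g x, v⟫ := by
    intro v
    have := congrFun (congrArg (fun (L : EuclideanSpace ℝ (Fin n) →L[ℝ] ℝ) => (L : EuclideanSpace ℝ (Fin n) → ℝ)) hfe) v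
    simp only [ContinuousLinearMap.comp_apply, ContinuousLinearMap.prod_apply,
      fderivInnerCLM_apply, ContinuousLinearMap.smul_apply, smul_eq_mul] at this
    rw [htx v] at this
    rw [real_inner_comm (H v) (g x)] at this
    rw [real_inner_comm (H v) (g x)]
    linarith
  -- the adjoint of H - 2K kills g x
  set A : EuclideanSpace ℝ (Fin n) →ₗ[ℝ] EuclideanSpace ℝ (Fin n) := (H : EuclideanSpace ℝ (Fin n) →ₗ[ℝ] EuclideanSpace ℝ (Fin n)) - (2 * K) • LinearMap.id with hAdef
  have hker : LinearMap.adjoint A (g x) = 0 := by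
    have h0 : ∀ v, ⟪LinearMap.adjoint A (g x), v⟫ = 0 := by
      intro v
      rw [LinearMap.adjoint_inner_left]
      simp only [hAdef, LinearMap.sub_apply, LinearMap.smul_apply, LinearMap.id_apply,
        ContinuousLinearMap.coe_coe, inner_sub_right, inner_smul_right, real_inner_smul_right]
      rw [key v]
      ring
    have := h0 (LinearMap.adjoint A (g x))
    rwa [inner_self_eq_zero] at this
  have hdetadj : LinearMap.det (LinearMap.adjoint A) = 0 := by
    by_contra h
    exact hne ((LinearMap.equivOfDetNeZero _ h).injective (by simpa using hker))
  rw [← det_adjoint_eq A]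
  exact hdetadj
end

section
/- Let r : ℝ² → ℝ³ be a smooth regular parameterized surface with unit normal n(u,v), and define p(u,v,d) = r(u,v) + d·n(u,v). Suppose t : ℝ³ → ℝ is differentiable and satisfies t(p(u,v,d)) = K·d² for all (u,v,d) in an open neighborhood of (u₀,v₀,0). Then at x = r(u₀,v₀), ∇t(x) = 0, and along the normal line, ∇t(p(u₀,v₀,d)) = 2K·d·n(u₀,v₀) for d near 0 (using that ∂p/∂u and ∂p/∂v are orthogonal to n and ∂p/∂d = n at d = 0). -/
open RealInnerProductSpace

lemma grad_inner (t : EuclideanSpace ℝ (Fin 3) → ℝ) (x y : EuclideanSpace ℝ (Fin 3)) :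
    ⟪gradient t x, y⟫ = fderiv ℝ t x y := by
  rw [gradient, InnerProductSpace.toDual_symm_apply]

theorem stmt17 (r nml : ℝ → ℝ → EuclideanSpace ℝ (Fin 3))
    (hr : ContDiff ℝ (⊤ : ℕ∞) (fun q : ℝ × ℝ => r q.1 q.2))
    (hnml : ContDiff ℝ (⊤ : ℕ∞) (fun q : ℝ × ℝ => nml q.1 q.2))
    (hunit : ∀ u v, ‖nml u v‖ = 1)
    (p : ℝ → ℝ → ℝ → EuclideanSpace ℝ (Fin 3))
    (hp : p = fun u v d => r u v + d • nml u v)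
    (t : EuclideanSpace ℝ (Fin 3) → ℝ) (htdiff : Differentiable ℝ t)
    (K : ℝ) (hK : 0 < K) (u₀ v₀ : ℝ)
    (heq : ∀ᶠ q : ℝ × ℝ × ℝ in nhds (u₀, v₀, 0), t (p q.1 q.2.1 q.2.2) = K * q.2.2 ^ 2)
    (horth_u : ∀ᶠ d in nhds (0 : ℝ), ⟪deriv (fun u => p u v₀ d) u₀, nml u₀ v₀⟫ = 0)
    (horth_v : ∀ᶠ d in nhds (0 : ℝ), ⟪deriv (fun v => p u₀ v d) v₀, nml u₀ v₀⟫ = 0)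
    (hreg : ∀ᶠ d in nhds (0 : ℝ),
      LinearIndependent ℝ
        ![deriv (fun u => p u v₀ d) u₀, deriv (fun v => p u₀ v d) v₀, nml u₀ v₀]) :
    gradient t (r u₀ v₀) = 0 ∧
    ∀ᶠ d in nhds (0 : ℝ), gradient t (p u₀ v₀ d) = (2 * K * d) • nml u₀ v₀ := by
  subst hp
  -- extract an open set where the identity holds
  obtain ⟨U, hUopen, hUmem, hU⟩ : ∃ U : Set (ℝ × ℝ × ℝ), IsOpen U ∧ (u₀, v₀, (0:ℝ)) ∈ U ∧
      ∀ q ∈ U, t (r q.1 q.2.1 + q.2.2 • nml q.1 q.2.1) = K * q.2.2 ^ 2 := by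
    rcases Filter.eventually_iff_exists_mem.mp heq with ⟨s, hs, h⟩
    exact ⟨interior s, isOpen_interior, mem_interior_iff_mem_nhds.mpr hs,
      fun q hq => h q (interior_subset hq)⟩
  -- differentiability of the partial maps
  have hrd : Differentiable ℝ (fun q : ℝ × ℝ => r q.1 q.2) := hr.differentiable (by simp)
  have hnd : Differentiable ℝ (fun q : ℝ × ℝ => nml q.1 q.2) := hnml.differentiable (by simp)
  have hru : ∀ u v, DifferentiableAt ℝ (fun u' => r u' v) u := fun u v =>
    by have := (hrd (u, v)).comp u ((differentiableAt_id (𝕜 := ℝ) (x := u)).prodMk (differentiableAt_const v)); exact this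
  have hnu : ∀ u v, DifferentiableAt ℝ (fun u' => nml u' v) u := fun u v =>
    by have := (hnd (u, v)).comp u ((differentiableAt_id (𝕜 := ℝ) (x := u)).prodMk (differentiableAt_const v)); exact this
  have hrv : ∀ u v, DifferentiableAt ℝ (fun v' => r u v') v := fun u v =>
    by have := (hrd (u, v)).comp v ((differentiableAt_const u).prodMk differentiableAt_id); exact this
  have hnv : ∀ u v, DifferentiableAt ℝ (fun v' => nml u v') v := fun u v =>
    by have := (hnd (u, v)).comp v ((differentiableAt_const u).prodMk differentiableAt_id); exact this
  have main : ∀ᶠ d in nhds (0 : ℝ),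
      gradient t (r u₀ v₀ + d • nml u₀ v₀) = (2 * K * d) • nml u₀ v₀ := by
    have hmemU : ∀ᶠ d in nhds (0 : ℝ), (u₀, v₀, d) ∈ U := by
      have hc : ContinuousAt (fun d : ℝ => (u₀, v₀, d)) 0 := by fun_prop
      exact hc (hUopen.mem_nhds hUmem)
    filter_upwards [horth_u, horth_v, hreg, hmemU] with d h1 h2 h3 hdU
    set x : EuclideanSpace ℝ (Fin 3) := r u₀ v₀ + d • nml u₀ v₀ with hx
    set g : EuclideanSpace ℝ (Fin 3) := gradient t x with hg
    -- curves
    set cu : ℝ → EuclideanSpace ℝ (Fin 3) := fun u => r u v₀ + d • nml u v₀ with hcu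
    set cv : ℝ → EuclideanSpace ℝ (Fin 3) := fun v => r u₀ v + d • nml u₀ v with hcv
    set cd : ℝ → EuclideanSpace ℝ (Fin 3) := fun d' => r u₀ v₀ + d' • nml u₀ v₀ with hcd
    have hcud : DifferentiableAt ℝ cu u₀ := ((hru u₀ v₀).add ((hnu u₀ v₀).const_smul d))
    have hcvd : DifferentiableAt ℝ cv v₀ := ((hrv u₀ v₀).add ((hnv u₀ v₀).const_smul d))
    have hcdd : HasDerivAt cd (nml u₀ v₀) d := by
      have : HasDerivAt (fun d' : ℝ => d' • nml u₀ v₀) (nml u₀ v₀) d := by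
        simpa using (hasDerivAt_id d).smul_const (nml u₀ v₀)
      simpa [hcd] using this.const_add (r u₀ v₀)
    -- inner products of g with the curve derivatives
    have keyu : ⟪g, deriv cu u₀⟫ = 0 := by
      have hloc : (fun u => t (cu u)) =ᶠ[nhds u₀] fun _ => K * d ^ 2 := by
        have : ∀ᶠ u in nhds u₀, (u, v₀, d) ∈ U := by
          have hc : ContinuousAt (fun u : ℝ => (u, v₀, d)) u₀ := by fun_prop
          exact hc (hUopen.mem_nhds hdU)
        filter_upwards [this] with u hu using hU _ hu
      have h0 : deriv (fun u => t (cu u)) u₀ = 0 := by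
        rw [hloc.deriv_eq]; simp
      have hcr : HasDerivAt (fun u => t (cu u)) (fderiv ℝ t x (deriv cu u₀)) u₀ :=
        ((htdiff x).hasFDerivAt.comp_hasDerivAt u₀ hcud.hasDerivAt)
      rw [grad_inner, ← hcr.deriv, h0]
    have keyv : ⟪g, deriv cv v₀⟫ = 0 := by
      have hloc : (fun v => t (cv v)) =ᶠ[nhds v₀] fun _ => K * d ^ 2 := by
        have : ∀ᶠ v in nhds v₀, (u₀, v, d) ∈ U := by
          have hc : ContinuousAt (fun v : ℝ => (u₀, v, d)) v₀ := by fun_prop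
          exact hc (hUopen.mem_nhds hdU)
        filter_upwards [this] with v hv using hU _ hv
      have h0 : deriv (fun v => t (cv v)) v₀ = 0 := by
        rw [hloc.deriv_eq]; simp
      have hcr : HasDerivAt (fun v => t (cv v)) (fderiv ℝ t x (deriv cv v₀)) v₀ :=
        ((htdiff x).hasFDerivAt.comp_hasDerivAt v₀ hcvd.hasDerivAt)
      rw [grad_inner, ← hcr.deriv, h0]
    have keyd : ⟪g, nml u₀ v₀⟫ = 2 * K * d := by
      have hloc : (fun d' => t (cd d')) =ᶠ[nhds d] fun d' => K * d' ^ 2 := by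
        have : ∀ᶠ d' in nhds d, (u₀, v₀, d') ∈ U := by
          have hc : ContinuousAt (fun d' : ℝ => (u₀, v₀, d')) d := by fun_prop
          exact hc (hUopen.mem_nhds hdU)
        filter_upwards [this] with d' hd' using hU _ hd'
      have h0 : deriv (fun d' => t (cd d')) d = 2 * K * d := by
        rw [hloc.deriv_eq]
        have : HasDerivAt (fun d' : ℝ => K * d' ^ 2) (2 * K * d) d := by
          have := ((hasDerivAt_pow 2 d).const_mul K)
          simpa [mul_comm, mul_assoc, mul_left_comm] using this
        exact this.deriv
      have hcr : HasDerivAt (fun d' => t (cd d')) (fderiv ℝ t x (nml u₀ v₀)) d :=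
        ((htdiff x).hasFDerivAt.comp_hasDerivAt d hcdd)
      rw [grad_inner, ← hcr.deriv, h0]
    -- now g - (2Kd) • n is orthogonal to a spanning family
    set b : Fin 3 → EuclideanSpace ℝ (Fin 3) := ![deriv cu u₀, deriv cv v₀, nml u₀ v₀] with hb
    have hspan : Submodule.span ℝ (Set.range b) = ⊤ := by
      refine h3.span_eq_top_of_card_eq_finrank ?_
      simp [finrank_euclideanSpace_fin]
    set w : EuclideanSpace ℝ (Fin 3) := g - (2 * K * d) • nml u₀ v₀ with hw
    have horth : ∀ i, ⟪w, b i⟫ = 0 := by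
      intro i
      have hnn : ⟪nml u₀ v₀, nml u₀ v₀⟫ = (1 : ℝ) := by
        rw [real_inner_self_eq_norm_sq, hunit]; norm_num
      have o1 : ⟪w, deriv cu u₀⟫ = 0 := by
        rw [hw, inner_sub_left, real_inner_smul_left, keyu,
          real_inner_comm (deriv cu u₀) (nml u₀ v₀), h1]; ring
      have o2 : ⟪w, deriv cv v₀⟫ = 0 := by
        rw [hw, inner_sub_left, real_inner_smul_left, keyv,
          real_inner_comm (deriv cv v₀) (nml u₀ v₀), h2]; ring
      have o3 : ⟪w, nml u₀ v₀⟫ = 0 := by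
        rw [hw, inner_sub_left, real_inner_smul_left, keyd, hnn]; ring
      fin_cases i
      · exact o1
      · exact o2
      · exact o3
    have hwz : w = 0 := by
      have : ∀ y : EuclideanSpace ℝ (Fin 3), ⟪w, y⟫ = 0 := by
        intro y
        have hy : y ∈ Submodule.span ℝ (Set.range b) := by rw [hspan]; trivial
        induction hy using Submodule.span_induction with
        | mem z hz => obtain ⟨i, rfl⟩ := hz; exact horth i
        | zero => simp
        | add y z _ _ hy hz => rw [inner_add_right, hy, hz, add_zero]
        | smul a y _ hy => rw [inner_smul_right, hy, mul_zero]
      have := this w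
      rwa [inner_self_eq_zero] at this
    have : g = (2 * K * d) • nml u₀ v₀ := by
      have := sub_eq_zero.mp hwz
      exact this
    exact this
  constructor
  · have h0 := main.self_of_nhds
    simpa using h0
  · simpa using main
end
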